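/- Fix a = 1/m with m a positive integer, and consider the sequences (h_n, a_n, α_n) defined by the strip-crossing recurrences with initial data a_0 = a, α_0 ∈ {0, 1}, and h_0 = ℓ·a where 2ℓ is a positive integer with ℓ ≥ 1. Then for every n ∈ ℕ: a_n = a and h_n is a half-integer multiple of a, i.e. 2·h_n / a ∈ ℤ. -/

import Mathlib

/-
If `1/a` is an integer and `a_n = a`, then `(1 - a_n)/a = 1/a - 1` is an integer, so
`γ_n = 1/a - 1` and `β_n = 0`. Hence `h_{n+1}` differs from `-h_n` by an integer multiple of
`a/2`, and `2|h_{n+1}|/a = ±2h_{n+1}/a` is an integer, whose fractional part vanishes: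
`a_{n+1} = a`. The states with `a_n = a` and `2h_n/a ∈ ℤ` are thus invariant under the step.
-/

/-- One step of the strip-crossing recurrences: from the triple `(h_n, a_n, α_n)`
compute `γ_n = ⌊(1 − a_n)/a⌋`, `β_n = a·frac((1 − a_n)/a)`, and then
`h_{n+1} = −(h_n + (−1)^{α_n}·(a_n + (−1)^{γ_n+1}·β_n − (1 − (−1)^{γ_n})·a/2))`,
`α_{n+1} = (α_n + γ_n + 1 + ⌊(2|h_{n+1}| + β_n)/a⌋) mod 2`,
`a_{n+1} = a·(1 − frac((2|h_{n+1}| + β_n)/a))`. -/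
noncomputable def stripStep (a : ℝ) (s : ℝ × ℝ × ℤ) : ℝ × ℝ × ℤ :=
  let h := s.1
  let an := s.2.1
  let α := s.2.2
  let γ : ℤ := ⌊(1 - an) / a⌋
  let β : ℝ := a * Int.fract ((1 - an) / a)
  let h' : ℝ :=
    -(h + (-1 : ℝ) ^ α * (an + (-1 : ℝ) ^ (γ + 1) * β - (1 - (-1 : ℝ) ^ γ) * a / 2))
  let α' : ℤ := (α + γ + 1 + ⌊(2 * |h'| + β) / a⌋) % 2
  let a' : ℝ := a * (1 - Int.fract ((2 * |h'| + β) / a))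
  (h', a', α')

lemma exists_intCast_eq_neg_one_zpow {K : Type*} [DivisionRing K] (n : ℤ) :
    ∃ k : ℤ, (-1 : K) ^ n = k :=
  ⟨n.negOnePow, (Int.cast_negOnePow K n).symm⟩

lemma exists_intCast_eq_abs_div {K : Type*} [Field K] [LinearOrder K] {x a : K}
    (hx : ∃ j : ℤ, x / a = j) :
    ∃ j : ℤ, |x| / a = j := by
  obtain ⟨j, hj⟩ := hx
  rcases abs_choice x with h | h
  · exact ⟨j, by rw [h, hj]⟩
  · exact ⟨-j, by rw [h, neg_div, hj, Int.cast_neg]⟩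

def halfIntStates (a : ℝ) : Set (ℝ × ℝ × ℤ) :=
  {s | s.2.1 = a ∧ ∃ j : ℤ, 2 * s.1 / a = j}

section

variable {a : ℝ} {k : ℤ} {s : ℝ × ℝ × ℤ}

lemma one_sub_div_eq_intCast (hak : a * k = 1) : (1 - a) / a = ((k - 1 : ℤ) : ℝ) := by
  have ha : a ≠ 0 := left_ne_zero_of_mul_eq_one hak
  rw [Int.cast_sub, Int.cast_one, eq_sub_iff_add_eq, div_add_one ha, sub_add_cancel,
    one_div, ← eq_inv_of_mul_eq_one_right hak]

lemma stripStep_fst_of_snd_eq (hak : a * k = 1) (hs : s.2.1 = a) :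
    (stripStep a s).1 = -(s.1 + (-1 : ℝ) ^ s.2.2 * (a - (1 - (-1 : ℝ) ^ (k - 1)) * a / 2)) := by
  have hγ := one_sub_div_eq_intCast hak
  simp only [stripStep, hs, hγ, Int.floor_intCast, Int.fract_intCast, mul_zero, add_zero]

lemma stripStep_snd_of_snd_eq (hak : a * k = 1) (hs : s.2.1 = a) :
    (stripStep a s).2.1 = a * (1 - Int.fract (2 * |(stripStep a s).1| / a)) := by
  have hγ := one_sub_div_eq_intCast hak
  simp only [stripStep, hs, hγ, Int.fract_intCast, mul_zero, add_zero]

lemma exists_intCast_eq_two_mul_stripStep_fst_div (hak : a * k = 1) (hs : s ∈ halfIntStates a) :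
    ∃ j : ℤ, 2 * (stripStep a s).1 / a = j := by
  have ha : a ≠ 0 := left_ne_zero_of_mul_eq_one hak
  obtain ⟨hsnd, j, hj⟩ := hs
  obtain ⟨u, hu⟩ := exists_intCast_eq_neg_one_zpow (K := ℝ) s.2.2
  obtain ⟨v, hv⟩ := exists_intCast_eq_neg_one_zpow (K := ℝ) (k - 1)
  refine ⟨-(j + u * (1 + v)), ?_⟩
  rw [stripStep_fst_of_snd_eq hak hsnd, hu, hv]
  rw [div_eq_iff ha] at hj ⊢
  push_cast
  linear_combination -hj

lemma mapsTo_stripStep_halfIntStates (hak : a * k = 1) :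
    Set.MapsTo (stripStep a) (halfIntStates a) (halfIntStates a) := by
  intro s hs
  obtain ⟨j, hj⟩ := exists_intCast_eq_two_mul_stripStep_fst_div hak hs
  refine ⟨?_, j, hj⟩
  obtain ⟨i, hi⟩ := exists_intCast_eq_abs_div (x := 2 * (stripStep a s).1) ⟨j, hj⟩
  rw [stripStep_snd_of_snd_eq hak hs.1, ← abs_two, ← abs_mul, hi, Int.fract_intCast, sub_zero,
    mul_one]

end

theorem stripStep_half_integer_general (m : ℕ) (hm : 0 < m) (a : ℝ) (ha : a = 1 / (m : ℝ))
    (α₀ : ℤ)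
    (ℓ : ℝ) (hℓint : ∃ j : ℤ, 0 < j ∧ 2 * ℓ = (j : ℝ))
    (h₀ : ℝ) (hh₀ : h₀ = ℓ * a) :
    ∀ n : ℕ, ((stripStep a)^[n] (h₀, a, α₀)).2.1 = a ∧
      ∃ j : ℤ, 2 * ((stripStep a)^[n] (h₀, a, α₀)).1 / a = (j : ℝ) := by
  have hak : a * (m : ℤ) = 1 := by
    rw [ha, Int.cast_natCast, one_div_mul_cancel (Nat.cast_ne_zero.mpr hm.ne')]
  have h_init : (h₀, a, α₀) ∈ halfIntStates a := by
    obtain ⟨j, -, hj⟩ := hℓint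
    refine ⟨rfl, j, ?_⟩
    rw [hh₀, ← hj, ← mul_assoc, mul_div_cancel_right₀ _ (left_ne_zero_of_mul_eq_one hak)]
  exact fun n => (mapsTo_stripStep_halfIntStates hak).iterate n h_init

/-- For `a = 1/m` with `m` a positive integer, initial data `a₀ = a`, `α₀ ∈ {0, 1}`,
and `h₀ = ℓ·a` with `2ℓ` a positive integer and `ℓ ≥ 1`, every `a_n` equals `a` and
every `h_n` is a half-integer multiple of `a`. -/
theorem stripStep_half_integer (m : ℕ) (hm : 0 < m) (a : ℝ) (ha : a = 1 / (m : ℝ))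
    (α₀ : ℤ) (hα₀ : α₀ = 0 ∨ α₀ = 1)
    (ℓ : ℝ) (hℓ : 1 ≤ ℓ) (hℓint : ∃ j : ℤ, 0 < j ∧ 2 * ℓ = (j : ℝ))
    (h₀ : ℝ) (hh₀ : h₀ = ℓ * a) :
    ∀ n : ℕ, ((stripStep a)^[n] (h₀, a, α₀)).2.1 = a ∧
      ∃ j : ℤ, 2 * ((stripStep a)^[n] (h₀, a, α₀)).1 / a = (j : ℝ) :=
  stripStep_half_integer_general m hm a ha α₀ ℓ hℓint h₀ hh₀
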